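/- For every steplength γ > 0 and every j ≥ 0, the AsyRK iterates satisfy 𝔼⟨ x_{k(j)} − x_j , θ_{i_j} P_{t_j} a_{i_j} (a_{i_j}ᵀ x_{k(j)} − b_{i_j}) ⟩ ≤ (γ λ_max / (2m²)) Σ_{d=k(j)}^{j−1} [ 𝔼(‖Ax_{k(d)} − b‖²) + 𝔼(‖Ax_{k(j)} − b‖²) ]. -/

import Mathlib

/-!
Unrolling the recursion, `x_{k(j)} - x_j = γ ∑_{d=k(j)}^{j-1} g(Z_d, x_{k(d)})`, where `g` is the
random AsyRK direction. Up to time `j` everything is a function of the first `j + 1` draws, so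
every expectation is a finite sum weighted by the product law. Neither `x_{k(d)}`, `x_{k(j)}` nor
`Z_d` depends on `Z_j`, so averaging over `Z_j` replaces `g(Z_j, x_{k(j)})` by its mean
`h(x_{k(j)})`, where `h(y) = Aᵀ(Ay - b)/m`; since `k(j) ≤ d`, averaging over `Z_d` then does the
same for `g(Z_d, x_{k(d)})`. It remains to bound `⟨h y, h z⟩ ≤ (‖h y‖² + ‖h z‖²)/2` and
`‖Aᵀu‖² ≤ λ_max ‖u‖²`.
-/

open MeasureTheory ProbabilityTheory Matrix Finset
open scoped ENNReal
-- A finite sample `v : Fin N → E` is read as the path `fun i : ℕ => v i`; the cast wraps modulo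
-- `N`, which is harmless since only times below `N` are ever used.
open Fin.NatCast

section Spectral

open Module.End in
theorem LinearMap.IsSymmetric.inner_apply_self_le {E : Type*} [NormedAddCommGroup E]
    [InnerProductSpace ℝ E] [FiniteDimensional ℝ E] {T : E →ₗ[ℝ] E} (hT : T.IsSymmetric)
    {c : ℝ} (hc : ∀ μ, HasEigenvalue T μ → μ ≤ c) (x : E) :
    inner ℝ (T x) x ≤ c * ‖x‖ ^ 2 := by
  let B := hT.eigenvectorBasis rfl
  have hinner : inner ℝ (T x) x = ∑ i, hT.eigenvalues rfl i * B.repr x i ^ 2 := by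
    rw [← B.repr.inner_map_map, PiLp.inner_apply]
    refine Finset.sum_congr rfl fun i _ => ?_
    rw [hT.eigenvectorBasis_apply_self_apply, RCLike.inner_apply, conj_trivial]
    simp only [RCLike.ofReal_real_eq_id, id_eq, B]
    ring
  have hnorm : ‖x‖ ^ 2 = ∑ i, B.repr x i ^ 2 := by
    rw [← B.repr.norm_map, EuclideanSpace.real_norm_sq_eq]
  rw [hinner, hnorm, Finset.mul_sum]
  exact Finset.sum_le_sum fun i _ =>
    mul_le_mul_of_nonneg_right (hc _ (hT.hasEigenvalue_eigenvalues rfl i)) (sq_nonneg _)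

theorem Matrix.IsHermitian.dotProduct_mulVec_le {ι : Type*} [Fintype ι] [DecidableEq ι]
    {M : Matrix ι ι ℝ} (hM : M.IsHermitian) {c : ℝ}
    (hc : c ∈ upperBounds {μ | ∃ v, v ≠ 0 ∧ M *ᵥ v = μ • v}) (x : ι → ℝ) :
    x ⬝ᵥ (M *ᵥ x) ≤ c * (x ⬝ᵥ x) := by
  have := (isSymmetric_toEuclideanLin_iff.mpr hM).inner_apply_self_le (c := c) ?_
    (WithLp.toLp 2 x)
  · rw [EuclideanSpace.real_norm_sq_eq, EuclideanSpace.inner_eq_star_dotProduct] at this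
    simpa [dotProduct_comm, dotProduct, sq] using this
  · intro μ hμ
    obtain ⟨v, hv⟩ := hμ.exists_hasEigenvector
    refine hc ⟨WithLp.ofLp v, ?_, ?_⟩
    · simpa using hv.2
    · simpa using congrArg WithLp.ofLp (Module.End.mem_eigenspace_iff.mp hv.1)

variable {ι κ : Type*} [Fintype ι] [Fintype κ]

theorem Matrix.dotProduct_transpose_mul_mulVec (A : Matrix κ ι ℝ) (x y : ι → ℝ) :
    x ⬝ᵥ ((Aᵀ * A) *ᵥ y) = (A *ᵥ x) ⬝ᵥ (A *ᵥ y) := by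
  rw [← mulVec_mulVec, dotProduct_mulVec, vecMul_transpose]

theorem Matrix.nonneg_of_transpose_mul_self_mulVec_eq_smul {A : Matrix κ ι ℝ} {c : ℝ}
    {v : ι → ℝ} (hv : v ≠ 0) (h : (Aᵀ * A) *ᵥ v = c • v) : 0 ≤ c := by
  have hpos : 0 < v ⬝ᵥ v := lt_of_le_of_ne (Fintype.sum_nonneg fun i => mul_self_nonneg (v i))
    (Ne.symm (dotProduct_self_eq_zero.not.mpr hv))
  have : c * (v ⬝ᵥ v) = (A *ᵥ v) ⬝ᵥ (A *ᵥ v) := by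
    rw [← dotProduct_transpose_mul_mulVec, h, dotProduct_smul, smul_eq_mul]
  exact nonneg_of_mul_nonneg_left (this ▸ Fintype.sum_nonneg fun i => mul_self_nonneg _) hpos

theorem Matrix.dotProduct_le_half_add (u w : ι → ℝ) : u ⬝ᵥ w ≤ (u ⬝ᵥ u + w ⬝ᵥ w) / 2 := by
  have : 0 ≤ (u - w) ⬝ᵥ (u - w) := Fintype.sum_nonneg fun i => mul_self_nonneg _
  simp only [sub_dotProduct, dotProduct_sub, dotProduct_comm w u] at this
  linarith

variable [DecidableEq ι]

theorem Matrix.transpose_mulVec_dotProduct_le {A : Matrix κ ι ℝ} {c : ℝ}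
    (hc : IsGreatest {μ | ∃ v, v ≠ 0 ∧ (Aᵀ * A) *ᵥ v = μ • v} c) (u : κ → ℝ) :
    (Aᵀ *ᵥ u) ⬝ᵥ (Aᵀ *ᵥ u) ≤ c * (u ⬝ᵥ u) := by
  obtain ⟨v, hv, hcv⟩ := hc.1
  have hc0 : 0 ≤ c := nonneg_of_transpose_mul_self_mulVec_eq_smul hv hcv
  set q := Aᵀ *ᵥ u
  have hq : q ⬝ᵥ q = u ⬝ᵥ (A *ᵥ q) := by
    rw [dotProduct_comm u, dotProduct_mulVec, ← mulVec_transpose, transpose_transpose]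
  have hAq : (A *ᵥ q) ⬝ᵥ (A *ᵥ q) ≤ c * (q ⬝ᵥ q) := by
    rw [← dotProduct_transpose_mul_mulVec]
    have hM : (Aᵀ * A).IsHermitian := by
      simpa using isHermitian_conjTranspose_mul_self A
    exact hM.dotProduct_mulVec_le hc.2 q
  have hcs : (u ⬝ᵥ (A *ᵥ q)) ^ 2 ≤ (u ⬝ᵥ u) * ((A *ᵥ q) ⬝ᵥ (A *ᵥ q)) := by
    simpa only [dotProduct, sq] using Finset.sum_mul_sq_le_sq_mul_sq univ u (A *ᵥ q)
  have hu : 0 ≤ u ⬝ᵥ u := Fintype.sum_nonneg fun i => mul_self_nonneg (u i)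
  rw [← hq] at hcs
  by_contra! hlt
  have hq0 : 0 < q ⬝ᵥ q := (mul_nonneg hc0 hu).trans_lt hlt
  nlinarith [mul_le_mul_of_nonneg_left hAq hu, mul_lt_mul_of_pos_right hlt hq0]

end Spectral

section FiniteLaw

variable {Ω E : Type*} [MeasurableSpace Ω] {P : Measure Ω} [IsProbabilityMeasure P]
  [Fintype E] [MeasurableSpace E] [MeasurableSingletonClass E] {ν : E → ℝ≥0∞}

theorem sum_toReal_eq_one_of_measure_eq {X : Ω → E} (hX : Measurable X)
    (hν : ∀ p, P {ω | X ω = p} = ν p) : ∑ p, (ν p).toReal = 1 := by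
  simp_rw [← hν, ← measureReal_def]
  change ∑ p, P.real (X ⁻¹' {p}) = 1
  rw [sum_measureReal_preimage_singleton univ fun p _ => hX (measurableSet_singleton p)]
  simp

theorem integral_comp_eq_sum_prod {ι : Type*} [Fintype ι] [DecidableEq ι] {Z : ι → Ω → E}
    (hZ : ∀ i, Measurable (Z i)) (hind : iIndepFun Z P) (hν : ∀ i p, P {ω | Z i ω = p} = ν p)
    (F : (ι → E) → ℝ) :
    ∫ ω, F (fun i => Z i ω) ∂P = ∑ v, (∏ i, (ν (v i)).toReal) * F v := by
  rw [← integral_map (measurable_pi_lambda _ hZ).aemeasurable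
      (measurable_of_finite F).aestronglyMeasurable,
    hind.map_fun_eq_pi_map fun i => (hZ i).aemeasurable, integral_fintype .of_finite]
  refine Fintype.sum_congr _ _ fun v => ?_
  rw [measureReal_def, Measure.pi_singleton, ENNReal.toReal_prod, smul_eq_mul]
  congr 1
  refine Fintype.prod_congr _ _ fun i => ?_
  rw [Measure.map_apply (hZ i) (measurableSet_singleton _), ← hν i]
  rfl

end FiniteLaw

section ProductWeights

variable {ι E : Type*} [Fintype ι] [DecidableEq ι] [Fintype E] {w : E → ℝ}

theorem sum_prod_mul_eq_sum_prod_mul_sum_of_update (hw : ∑ p, w p = 1) (c : ι)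
    (Φ : E → (ι → E) → ℝ)
    (hΦ : ∀ p v q, Φ p (Function.update v c q) = Φ p v) :
    ∑ v, (∏ i, w (v i)) * Φ (v c) v = ∑ v, (∏ i, w (v i)) * ∑ p, w p * Φ p v := by
  -- resampling coordinate `c`: the involution `(v, p) ↦ (update v c p, v c)` preserves the weights
  have hweight : ∀ v p, (∏ i, w (Function.update v c p i)) * w (v c) = (∏ i, w (v i)) * w p := by
    intro v p
    rw [← Finset.mul_prod_erase univ _ (mem_univ c), ← Finset.mul_prod_erase univ _ (mem_univ c),
      Function.update_self]
    rw [Finset.prod_congr rfl fun i hi => by rw [Function.update_of_ne (ne_of_mem_erase hi)]]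
    ring
  have e : Function.Involutive fun vp : (ι → E) × E => (Function.update vp.1 c vp.2, vp.1 c) := by
    intro vp; simp
  calc ∑ v, (∏ i, w (v i)) * Φ (v c) v
      = ∑ vp : (ι → E) × E, (∏ i, w (vp.1 i)) * w vp.2 * Φ (vp.1 c) vp.1 := by
        simp_rw [Fintype.sum_prod_type, mul_assoc, ← Finset.mul_sum, ← Finset.sum_mul, hw, one_mul]
    _ = ∑ vp : (ι → E) × E, (∏ i, w (vp.1 i)) * w vp.2 * Φ vp.2 vp.1 := by
        rw [← Equiv.sum_comp (Function.Involutive.toPerm _ e)]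
        refine Fintype.sum_congr _ _ fun vp => ?_
        simp [hweight, hΦ]
    _ = ∑ v, (∏ i, w (v i)) * ∑ p, w p * Φ p v := by
        simp_rw [Fintype.sum_prod_type, mul_assoc, ← Finset.mul_sum]

theorem sum_prod_mul_dotProduct_eq_of_mean {κ : Type*} [Fintype κ] (hw : ∑ p, w p = 1)
    {dir : E → (κ → ℝ) → κ → ℝ} {g : (κ → ℝ) → κ → ℝ} (hmean : ∀ y, ∑ p, w p • dir p y = g y)
    (c : ι) {a y : (ι → E) → κ → ℝ} (ha : ∀ v q, a (Function.update v c q) = a v)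
    (hy : ∀ v q, y (Function.update v c q) = y v) :
    ∑ v, (∏ i, w (v i)) * (a v ⬝ᵥ dir (v c) (y v)) = ∑ v, (∏ i, w (v i)) * (a v ⬝ᵥ g (y v)) := by
  rw [sum_prod_mul_eq_sum_prod_mul_sum_of_update hw c (fun p v => a v ⬝ᵥ dir p (y v))
    fun p v q => by rw [ha, hy]]
  simp_rw [← hmean, dotProduct_sum, dotProduct_smul, smul_eq_mul]

end ProductWeights

section DelayedIteration

variable {E ι : Type*} (k : ℕ → ℕ) (γ : ℝ) (dir : E → (ι → ℝ) → ι → ℝ) (x0 : ι → ℝ)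

-- The delay is clamped to `min (k t) t` to make the recursion well founded.
def delayedIterate (u : ℕ → E) : ℕ → ι → ℝ
  | 0 => x0
  | t + 1 => delayedIterate u t - γ • dir (u t) (delayedIterate u (min (k t) t))

variable {k γ dir x0}

theorem delayedIterate_succ {u : ℕ → E} {t : ℕ} (ht : k t ≤ t) :
    delayedIterate k γ dir x0 u (t + 1)
      = delayedIterate k γ dir x0 u t - γ • dir (u t) (delayedIterate k γ dir x0 u (k t)) := by
  rw [delayedIterate, min_eq_left ht]

theorem delayedIterate_congr {u u' : ℕ → E} {t : ℕ} (h : ∀ i < t, u i = u' i) :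
    delayedIterate k γ dir x0 u t = delayedIterate k γ dir x0 u' t := by
  induction t using Nat.strong_induction_on with
  | _ t ih =>
    cases t with
    | zero => simp only [delayedIterate]
    | succ t =>
      simp only [delayedIterate]
      rw [ih t (by omega) fun i hi => h i (by omega),
        ih (min (k t) t) (by omega) fun i hi => h i (by omega), h t (by omega)]

theorem delayedIterate_update_natCast {N : ℕ} [NeZero N] [DecidableEq E] (v : Fin N → E) {c t : ℕ}
    (hc : c < N) (ht : t ≤ c) (q : E) :
    delayedIterate k γ dir x0 (fun i => Function.update v c q i) t
      = delayedIterate k γ dir x0 (fun i => v i) t := by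
  refine delayedIterate_congr fun i hi => Function.update_of_ne (fun h => ?_) _ _
  have := congrArg Fin.val h
  rw [Fin.val_cast_of_lt (by omega), Fin.val_cast_of_lt hc] at this
  omega

theorem delayedIterate_comp_natCast {N : ℕ} [NeZero N] (u : ℕ → E) {t : ℕ} (ht : t ≤ N) :
    delayedIterate k γ dir x0 (fun i => u ((i : Fin N) : ℕ)) t = delayedIterate k γ dir x0 u t :=
  delayedIterate_congr fun i hi => by rw [Fin.val_cast_of_lt (by omega)]

end DelayedIteration

theorem sum_prod_mul_sub_dotProduct_eq {E ι : Type*} [Fintype E] [DecidableEq E] [Fintype ι]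
    {w : E → ℝ} (hw : ∑ p, w p = 1) {dir : E → (ι → ℝ) → ι → ℝ}
    {g : (ι → ℝ) → ι → ℝ} (hmean : ∀ y, ∑ p, w p • dir p y = g y) {k : ℕ → ℕ}
    (hk : ∀ t, k t ≤ t) {N : ℕ} [NeZero N] {X : ℕ → (Fin N → E) → ι → ℝ} {γ : ℝ}
    (hcausal : ∀ v c q t, c < N → t ≤ c → X t (Function.update v (c : Fin N) q) = X t v)
    (hstep : ∀ v t, t < N → X (t + 1) v = X t v - γ • dir (v t) (X (k t) v))
    {j : ℕ} (hj : j < N) :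
    ∑ v, (∏ i, w (v i)) * ((X (k j) v - X j v) ⬝ᵥ dir (v j) (X (k j) v))
      = γ * ∑ d ∈ Ico (k j) j, ∑ v, (∏ i, w (v i)) * (g (X (k d) v) ⬝ᵥ g (X (k j) v)) := by
  have htel : ∀ v, X (k j) v - X j v = γ • ∑ d ∈ Ico (k j) j, dir (v d) (X (k d) v) := by
    intro v
    rw [Finset.smul_sum, ← neg_sub, ← Finset.sum_Ico_sub (fun d => X d v) (hk j),
      ← Finset.sum_neg_distrib]
    refine Finset.sum_congr rfl fun d hd => ?_
    rw [hstep v d (by grind), neg_sub, sub_sub_cancel]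
  have hpeel : ∀ d ∈ Ico (k j) j,
      ∑ v, (∏ i, w (v i)) * (dir (v d) (X (k d) v) ⬝ᵥ dir (v j) (X (k j) v))
        = ∑ v, (∏ i, w (v i)) * (g (X (k d) v) ⬝ᵥ g (X (k j) v)) := by
    intro d hd
    obtain ⟨hjd, hdj⟩ := Finset.mem_Ico.mp hd
    have hne : (d : Fin N) ≠ (j : Fin N) := fun h => by
      have := congrArg Fin.val h
      rw [Fin.val_cast_of_lt (by omega), Fin.val_cast_of_lt hj] at this
      omega
    rw [sum_prod_mul_dotProduct_eq_of_mean hw hmean (j : Fin N)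
      (fun v q => by rw [Function.update_of_ne hne, hcausal v j q _ hj (by grind)])
      (fun v q => hcausal v j q _ hj (hk j))]
    simp_rw [dotProduct_comm (dir _ _)]
    rw [sum_prod_mul_dotProduct_eq_of_mean hw hmean (d : Fin N) (a := fun v => g (X (k j) v))
      (fun v q => by rw [hcausal v d q _ (by omega) hjd])
      (fun v q => hcausal v d q _ (by omega) (hk d))]
    simp_rw [dotProduct_comm (g (X (k j) _))]
  calc ∑ v, (∏ i, w (v i)) * ((X (k j) v - X j v) ⬝ᵥ dir (v j) (X (k j) v))
      = ∑ v, γ * ∑ d ∈ Ico (k j) j,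
          (∏ i, w (v i)) * (dir (v d) (X (k d) v) ⬝ᵥ dir (v j) (X (k j) v)) := by
        simp_rw [htel, smul_dotProduct, sum_dotProduct, smul_eq_mul, Finset.mul_sum]
        exact Fintype.sum_congr _ _ fun v => Finset.sum_congr rfl fun d _ => by ring
    _ = γ * ∑ d ∈ Ico (k j) j, ∑ v, (∏ i, w (v i)) * (g (X (k d) v) ⬝ᵥ g (X (k j) v)) := by
        rw [← Finset.mul_sum, Finset.sum_comm, Finset.sum_congr rfl hpeel]

section AsyRK

variable {m n : ℕ} (A : Matrix (Fin m) (Fin n) ℝ) (b : Fin m → ℝ) (θ : Fin m → ℕ)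

-- `θ_i P_t a_i (a_iᵀ y - b_i)` for the draw `p = (i, t)`.
def asyRKDir (p : Fin m × Fin n) (y : Fin n → ℝ) : Fin n → ℝ :=
  fun s => if s = p.2 then (θ p.1 : ℝ) * A p.1 p.2 * ((A *ᵥ y) p.1 - b p.1) else 0

noncomputable def asyRKMean (y : Fin n → ℝ) : Fin n → ℝ := (m : ℝ)⁻¹ • (Aᵀ *ᵥ (A *ᵥ y - b))

noncomputable def asyRKWeight (p : Fin m × Fin n) : ℝ≥0∞ :=
  if A p.1 p.2 ≠ 0 then ((m : ℝ≥0∞) * θ p.1)⁻¹ else 0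

theorem sum_toReal_asyRKWeight_smul_asyRKDir
    (hθ : ∀ i, θ i = (Finset.univ.filter (fun t => A i t ≠ 0)).card) (y : Fin n → ℝ) :
    ∑ p, (asyRKWeight A θ p).toReal • asyRKDir A b θ p y = asyRKMean A b y := by
  ext s
  simp only [asyRKWeight, apply_ite ENNReal.toReal, ENNReal.toReal_inv, ENNReal.toReal_mul,
    ENNReal.toReal_natCast, ENNReal.toReal_zero, Finset.sum_apply, Pi.smul_apply, smul_eq_mul,
    asyRKDir, asyRKMean, Fintype.sum_prod_type, mul_ite, mul_zero, Finset.sum_ite_eq,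
    Finset.mem_univ, if_true, mulVec, dotProduct, transpose_apply, Finset.mul_sum, Pi.sub_apply]
  refine Finset.sum_congr rfl fun i _ => ?_
  split_ifs with h
  · have : (θ i : ℝ) ≠ 0 := by
      rw [hθ i, Nat.cast_ne_zero, ← Nat.pos_iff_ne_zero, Finset.card_pos]
      exact ⟨s, by simpa using h⟩
    field_simp
  · simp_all

theorem eq_delayedIterate_asyRKDir {k : ℕ → ℕ} (hk : ∀ t, k t ≤ t) {γ : ℝ} {x0 : Fin n → ℝ}
    {u : ℕ → Fin m × Fin n} {x : ℕ → Fin n → ℝ} (hx0 : x 0 = x0)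
    (hrec : ∀ t s, x (t + 1) s = x t s -
      (if s = (u t).2 then
        γ * (θ (u t).1 : ℝ) * A (u t).1 (u t).2 * ((∑ r, A (u t).1 r * x (k t) r) - b (u t).1)
       else 0))
    (t : ℕ) : x t = delayedIterate k γ (asyRKDir A b θ) x0 u t := by
  induction t using Nat.strong_induction_on with
  | _ t ih =>
    cases t with
    | zero => rw [hx0, delayedIterate]
    | succ t =>
      ext s
      rw [hrec, delayedIterate_succ (hk t), ← ih t (by omega), ← ih (k t) (by grind)]
      simp only [asyRKDir, Pi.sub_apply, Pi.smul_apply, smul_eq_mul, mul_ite, mul_zero, mul_assoc]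
      rfl

variable {lam : ℝ}

theorem asyRKMean_dotProduct_le
    (hlam : IsGreatest {c | ∃ v, v ≠ 0 ∧ (Aᵀ * A) *ᵥ v = c • v} lam) (y z : Fin n → ℝ) :
    asyRKMean A b y ⬝ᵥ asyRKMean A b z
      ≤ lam / (2 * m ^ 2) * (∑ s, ((A *ᵥ y) s - b s) ^ 2 + ∑ s, ((A *ᵥ z) s - b s) ^ 2) := by
  have hsq : ∀ r : Fin m → ℝ, ∑ s, r s ^ 2 = r ⬝ᵥ r := fun r => by simp only [dotProduct, sq]
  have hy := transpose_mulVec_dotProduct_le hlam (A *ᵥ y - b)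
  have hz := transpose_mulVec_dotProduct_le hlam (A *ᵥ z - b)
  have hyz := dotProduct_le_half_add (Aᵀ *ᵥ (A *ᵥ y - b)) (Aᵀ *ᵥ (A *ᵥ z - b))
  simp only [asyRKMean, smul_dotProduct, dotProduct_smul, smul_eq_mul, ← Pi.sub_apply, hsq]
  calc (m : ℝ)⁻¹ * ((m : ℝ)⁻¹ * ((Aᵀ *ᵥ (A *ᵥ y - b)) ⬝ᵥ (Aᵀ *ᵥ (A *ᵥ z - b))))
      ≤ (m : ℝ)⁻¹ * ((m : ℝ)⁻¹ * ((lam * ((A *ᵥ y - b) ⬝ᵥ (A *ᵥ y - b))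
          + lam * ((A *ᵥ z - b) ⬝ᵥ (A *ᵥ z - b))) / 2)) := by
        gcongr
        linarith
    _ = _ := by ring

theorem sum_mul_asyRKMean_dotProduct_le
    (hlam : IsGreatest {c | ∃ v, v ≠ 0 ∧ (Aᵀ * A) *ᵥ v = c • v} lam) {ι : Type*} [Fintype ι]
    {W : ι → ℝ} (hW : ∀ v, 0 ≤ W v) (y z : ι → Fin n → ℝ) :
    ∑ v, W v * (asyRKMean A b (y v) ⬝ᵥ asyRKMean A b (z v))
      ≤ lam / (2 * m ^ 2) * (∑ v, W v * ∑ s, ((A *ᵥ y v) s - b s) ^ 2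
        + ∑ v, W v * ∑ s, ((A *ᵥ z v) s - b s) ^ 2) := by
  rw [mul_add, Finset.mul_sum, Finset.mul_sum, ← Finset.sum_add_distrib]
  refine Finset.sum_le_sum fun v _ => ?_
  calc W v * (asyRKMean A b (y v) ⬝ᵥ asyRKMean A b (z v))
      ≤ W v * (lam / (2 * m ^ 2) *
          (∑ s, ((A *ᵥ y v) s - b s) ^ 2 + ∑ s, ((A *ᵥ z v) s - b s) ^ 2)) :=
        mul_le_mul_of_nonneg_left (asyRKMean_dotProduct_le A b hlam _ _) (hW v)
    _ = _ := by ring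

end AsyRK

theorem stmt13_general
    {m n : ℕ}
    (A : Matrix (Fin m) (Fin n) ℝ) (b : Fin m → ℝ)
    (θ : Fin m → ℕ)
    (hθ : ∀ i, θ i = (Finset.univ.filter (fun t => A i t ≠ 0)).card)
    (lammax : ℝ)
    (hlammax : IsGreatest
      {c : ℝ | ∃ v : Fin n → ℝ, v ≠ 0 ∧ (Aᵀ * A).mulVec v = c • v} lammax)
    (τ : ℕ)
    (k : ℕ → ℕ) (hk : ∀ j, j - τ ≤ k j ∧ k j ≤ j)
    (γ : ℝ) (hγ : 0 < γ)
    {Ω : Type*} [MeasurableSpace Ω] (P : Measure Ω) [IsProbabilityMeasure P]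
    (Z : ℕ → Ω → Fin m × Fin n)
    (hZmeas : ∀ j, Measurable (Z j))
    (hZindep : iIndepFun Z P)
    (hZdist : ∀ j (p : Fin m × Fin n),
      P {ω | Z j ω = p} =
        if A p.1 p.2 ≠ 0 then ((m : ENNReal) * (θ p.1 : ENNReal))⁻¹ else 0)
    (x0 : Fin n → ℝ)
    (x : ℕ → Ω → Fin n → ℝ)
    (hx0 : ∀ ω, x 0 ω = x0)
    (hrec : ∀ j ω s, x (j + 1) ω s = x j ω s -
      (if s = (Z j ω).2 then
        γ * (θ (Z j ω).1 : ℝ) * A (Z j ω).1 (Z j ω).2 *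
          ((∑ t, A (Z j ω).1 t * x (k j) ω t) - b (Z j ω).1)
       else 0))
    (j : ℕ) :
    (∫ ω, ∑ s, (x (k j) ω s - x j ω s) *
        (if s = (Z j ω).2 then
          (θ (Z j ω).1 : ℝ) * A (Z j ω).1 (Z j ω).2 *
            ((∑ t, A (Z j ω).1 t * x (k j) ω t) - b (Z j ω).1)
         else 0) ∂P)
      ≤ γ * lammax / (2 * m ^ 2) *
        ∑ d ∈ Finset.Ico (k j) j, ((∫ ω, ∑ s, (A.mulVec (x (k d) ω) s - b s) ^ 2 ∂P) + (∫ ω, ∑ s, (A.mulVec (x (k j) ω) s - b s) ^ 2 ∂P)) := by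
  have hk' : ∀ t, k t ≤ t := fun t => (hk t).2
  set w : Fin m × Fin n → ℝ := fun p => (asyRKWeight A θ p).toReal
  have hw : ∑ p, w p = 1 :=
    sum_toReal_eq_one_of_measure_eq (ν := asyRKWeight A θ) (hZmeas 0) (hZdist 0)
  have hmean := sum_toReal_asyRKWeight_smul_asyRKDir A b θ hθ
  set X : ℕ → (Fin (j + 1) → Fin m × Fin n) → Fin n → ℝ :=
    fun t v => delayedIterate k γ (asyRKDir A b θ) x0 (fun i => v i) t
  have hX : ∀ t ≤ j, ∀ ω, x t ω = X t (fun i => Z i ω) := fun t ht ω => by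
    rw [eq_delayedIterate_asyRKDir A b θ hk' (x := fun t => x t ω) (hx0 ω)
      (fun t s => hrec t ω s)]
    exact (delayedIterate_comp_natCast (fun i => Z i ω) (by omega)).symm
  have hE (F : (Fin (j + 1) → Fin m × Fin n) → ℝ) :
      ∫ ω, F (fun i => Z i ω) ∂P = ∑ v, (∏ i, w (v i)) * F v :=
    integral_comp_eq_sum_prod (Z := fun i : Fin (j + 1) => Z i) (ν := asyRKWeight A θ)
      (fun i => hZmeas i) (hZindep.precomp Fin.val_injective) (fun i => hZdist i) F
  have hR : ∀ t ≤ j, ∫ ω, ∑ s, ((A *ᵥ x t ω) s - b s) ^ 2 ∂P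
      = ∑ v, (∏ i, w (v i)) * ∑ s, ((A *ᵥ X t v) s - b s) ^ 2 := fun t ht => by
    simp_rw [hX t ht]
    exact hE fun v => ∑ s, ((A *ᵥ X t v) s - b s) ^ 2
  rw [Finset.sum_congr rfl fun d hd =>
    by rw [hR _ ((hk' d).trans (Finset.mem_Ico.mp hd).2.le), hR _ (hk' j)]]
  calc _ = ∑ v, (∏ i, w (v i)) * ((X (k j) v - X j v) ⬝ᵥ asyRKDir A b θ (v j) (X (k j) v)) := by
        rw [← hE]
        refine integral_congr_ae (ae_of_all _ fun ω => ?_)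
        simp only [← hX _ (hk' j), ← hX j le_rfl, Fin.val_cast_of_lt j.lt_succ_self]
        rfl
    _ = γ * ∑ d ∈ Ico (k j) j, ∑ v, (∏ i, w (v i)) *
          (asyRKMean A b (X (k d) v) ⬝ᵥ asyRKMean A b (X (k j) v)) :=
        sum_prod_mul_sub_dotProduct_eq hw hmean hk'
          (fun v c q t hc ht => delayedIterate_update_natCast v hc ht q)
          (fun v t _ => delayedIterate_succ (hk' t)) j.lt_succ_self
    _ ≤ γ * ∑ d ∈ Ico (k j) j, lammax / (2 * m ^ 2) *
          (∑ v, (∏ i, w (v i)) * ∑ s, ((A *ᵥ X (k d) v) s - b s) ^ 2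
            + ∑ v, (∏ i, w (v i)) * ∑ s, ((A *ᵥ X (k j) v) s - b s) ^ 2) := by
        gcongr with d hd
        exact sum_mul_asyRKMean_dotProduct_le A b hlammax
          (fun v => Finset.prod_nonneg fun i _ => ENNReal.toReal_nonneg) _ _
    _ = _ := by rw [← Finset.mul_sum]; ring

theorem stmt13
    {m n : ℕ} (hm : 0 < m) (hn : 0 < n)
    (A : Matrix (Fin m) (Fin n) ℝ) (b : Fin m → ℝ)
    (hconsistent : ∃ z : Fin n → ℝ, A.mulVec z = b)
    (hrows : ∀ i, ∑ t, (A i t) ^ 2 = 1)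
    (θ : Fin m → ℕ)
    (hθ : ∀ i, θ i = (Finset.univ.filter (fun t => A i t ≠ 0)).card)
    (lammax : ℝ)
    (hlammax : IsGreatest
      {c : ℝ | ∃ v : Fin n → ℝ, v ≠ 0 ∧ (Aᵀ * A).mulVec v = c • v} lammax)
    (τ : ℕ) (hτ : 1 ≤ τ)
    (k : ℕ → ℕ) (hk : ∀ j, j - τ ≤ k j ∧ k j ≤ j)
    (γ : ℝ) (hγ : 0 < γ)
    {Ω : Type*} [MeasurableSpace Ω] (P : Measure Ω) [IsProbabilityMeasure P]
    (Z : ℕ → Ω → Fin m × Fin n)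
    (hZmeas : ∀ j, Measurable (Z j))
    (hZindep : iIndepFun Z P)
    (hZdist : ∀ j (p : Fin m × Fin n),
      P {ω | Z j ω = p} =
        if A p.1 p.2 ≠ 0 then ((m : ENNReal) * (θ p.1 : ENNReal))⁻¹ else 0)
    (x0 : Fin n → ℝ)
    (x : ℕ → Ω → Fin n → ℝ)
    (hx0 : ∀ ω, x 0 ω = x0)
    (hrec : ∀ j ω s, x (j + 1) ω s = x j ω s -
      (if s = (Z j ω).2 then
        γ * (θ (Z j ω).1 : ℝ) * A (Z j ω).1 (Z j ω).2 *
          ((∑ t, A (Z j ω).1 t * x (k j) ω t) - b (Z j ω).1)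
       else 0))
    (j : ℕ) :
    (∫ ω, ∑ s, (x (k j) ω s - x j ω s) *
        (if s = (Z j ω).2 then
          (θ (Z j ω).1 : ℝ) * A (Z j ω).1 (Z j ω).2 *
            ((∑ t, A (Z j ω).1 t * x (k j) ω t) - b (Z j ω).1)
         else 0) ∂P)
      ≤ γ * lammax / (2 * m ^ 2) *
        ∑ d ∈ Finset.Ico (k j) j, ((∫ ω, ∑ s, (A.mulVec (x (k d) ω) s - b s) ^ 2 ∂P) + (∫ ω, ∑ s, (A.mulVec (x (k j) ω) s - b s) ^ 2 ∂P)) :=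
  stmt13_general A b θ hθ lammax hlammax τ k hk γ hγ P Z hZmeas hZindep hZdist x0 x hx0 hrec j
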